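/- Let A be a bounded linear operator on H. Then for every α ∈ [0,1], η(A)² ≤ (α/2)·ber(A²) + ‖ (α/4)|A|² + (1 − 3α/4)|A*|² + |A|⁴ ‖_ber. -/

import Mathlib

open scoped InnerProductSpace
open ContinuousLinearMap

variable {H : Type*} [NormedAddCommGroup H] [InnerProductSpace ℂ H] [CompleteSpace H]
variable {Ω : Type*} [Nonempty Ω]

/-- Berezin number: `ber(T) = sup_{λ∈Ω} |⟨T k̂_λ, k̂_λ⟩|`. -/
noncomputable def ber (k : Ω → H) (T : H →L[ℂ] H) : ℝ :=
  ⨆ lam : Ω, ‖⟪T (k lam), k lam⟫_ℂ‖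

/-- Berezin norm: `‖T‖_ber = sup_{λ,μ∈Ω} |⟨T k̂_λ, k̂_μ⟩|`. -/
noncomputable def bernorm (k : Ω → H) (T : H →L[ℂ] H) : ℝ :=
  ⨆ p : Ω × Ω, ‖⟪T (k p.1), k p.2⟫_ℂ‖

/-- Least Berezin number: `c(T) = inf_{λ∈Ω} |⟨T k̂_λ, k̂_λ⟩|`. -/
noncomputable def lber (k : Ω → H) (T : H →L[ℂ] H) : ℝ :=
  ⨅ lam : Ω, ‖⟪T (k lam), k lam⟫_ℂ‖

/-- Davis-Wielandt-Berezin radius: `η(T) = sup_{λ∈Ω} √(|⟨T k̂_λ, k̂_λ⟩|² + ‖T k̂_λ‖⁴)`. -/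
noncomputable def eta (k : Ω → H) (T : H →L[ℂ] H) : ℝ :=
  ⨆ lam : Ω, Real.sqrt (‖⟪T (k lam), k lam⟫_ℂ‖ ^ 2 + ‖T (k lam)‖ ^ 4)

/-- The modulus `|A| = (A*A)^{1/2}`. -/
noncomputable def absop (A : H →L[ℂ] H) : H →L[ℂ] H := CFC.sqrt (adjoint A * A)


/-!
Fix a unit vector `x` and split `|⟨Ax, x⟩|² = α |⟨Ax, x⟩|² + (1 - α) |⟨Ax, x⟩|²`. Buzano's
inequality `|⟨u, x⟩⟨x, v⟩| ≤ (‖u‖‖v‖ + |⟨u, v⟩|) / 2` with `u = Ax`, `v = A*x`, followed by AM-GM,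
bounds the first part by `(α/2) |⟨A²x, x⟩| + (α/4)(‖Ax‖² + ‖A*x‖²)`; Cauchy-Schwarz bounds the
second by `(1 - α) ‖A*x‖²`. Moreover `‖Ax‖⁴ = ⟨|A|²x, x⟩² ≤ ‖|A|²x‖² = ⟨|A|⁴x, x⟩`. Adding up,
the terms in `‖Ax‖²`, `‖A*x‖²` and `‖|A|²x‖²` are exactly the (real) Berezin symbol of
`(α/4)|A|² + (1 - 3α/4)|A*|² + |A|⁴` at `x`; taking suprema over the kernels gives the theorem.
-/

section InnerProduct

variable {𝕜 E F : Type*} [RCLike 𝕜] [NormedAddCommGroup E] [InnerProductSpace 𝕜 E]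
  [NormedAddCommGroup F] [InnerProductSpace 𝕜 F]

/-- Buzano's inequality. -/
theorem norm_inner_mul_inner_le_of_norm_eq_one {e : E} (he : ‖e‖ = 1) (u v : E) :
    ‖⟪u, e⟫_𝕜 * ⟪e, v⟫_𝕜‖ ≤ (‖u‖ * ‖v‖ + ‖⟪u, v⟫_𝕜‖) / 2 := by
  -- `w` is the reflection of `u` in the line `𝕜 e`; it has the norm of `u`.
  set w : E := (2 : 𝕜) • ⟪e, u⟫_𝕜 • e - u
  have hee : ⟪e, e⟫_𝕜 = 1 := by simp [inner_self_eq_norm_sq_to_K, he]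
  have hsum : (2 : 𝕜) * (⟪u, e⟫_𝕜 * ⟪e, v⟫_𝕜) = ⟪u, v⟫_𝕜 + ⟪w, v⟫_𝕜 := by
    simp only [w, inner_sub_left, inner_smul_left, inner_conj_symm, map_ofNat]
    ring
  have hw : ‖w‖ = ‖u‖ := by
    have hww : ⟪w, w⟫_𝕜 = ⟪u, u⟫_𝕜 := by
      simp only [w, inner_sub_sub_self, inner_smul_left, inner_smul_right, inner_conj_symm,
        map_ofNat, hee]
      ring
    rw [← sq_eq_sq₀ (norm_nonneg w) (norm_nonneg u), norm_sq_eq_re_inner (𝕜 := 𝕜),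
      norm_sq_eq_re_inner (𝕜 := 𝕜), hww]
  have h2 : 2 * ‖⟪u, e⟫_𝕜 * ⟪e, v⟫_𝕜‖ ≤ ‖⟪u, v⟫_𝕜‖ + ‖u‖ * ‖v‖ :=
    calc 2 * ‖⟪u, e⟫_𝕜 * ⟪e, v⟫_𝕜‖ = ‖⟪u, v⟫_𝕜 + ⟪w, v⟫_𝕜‖ := by
          rw [← hsum, norm_mul (2 : 𝕜), RCLike.norm_ofNat]
      _ ≤ ‖⟪u, v⟫_𝕜‖ + ‖w‖ * ‖v‖ :=
          (norm_add_le _ _).trans (by gcongr; exact norm_inner_le_norm _ _)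
      _ = ‖⟪u, v⟫_𝕜‖ + ‖u‖ * ‖v‖ := by rw [hw]
  linarith

theorem norm_inner_apply_le_opNorm_mul_norm_mul_norm (T : E →L[𝕜] F) (x : E) (y : F) :
    ‖⟪T x, y⟫_𝕜‖ ≤ ‖T‖ * ‖x‖ * ‖y‖ :=
  (norm_inner_le_norm _ _).trans (by gcongr; exact T.le_opNorm x)

variable [CompleteSpace E]

theorem inner_adjoint_mul_self_apply_self (A : E →L[𝕜] E) (x : E) :
    ⟪(adjoint A * A) x, x⟫_𝕜 = (‖A x‖ : 𝕜) ^ 2 := by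
  rw [mul_apply_eq_comp, adjoint_inner_left, inner_self_eq_norm_sq_to_K]

theorem norm_apply_pow_four_le {x : E} (hx : ‖x‖ = 1) (A : E →L[𝕜] E) :
    ‖A x‖ ^ 4 ≤ ‖(adjoint A * A) x‖ ^ 2 := by
  have h : ‖A x‖ ^ 2 ≤ ‖(adjoint A * A) x‖ :=
    calc ‖A x‖ ^ 2 = ‖⟪(adjoint A * A) x, x⟫_𝕜‖ := by
          rw [inner_adjoint_mul_self_apply_self, norm_pow, RCLike.norm_ofReal, abs_norm]
      _ ≤ ‖(adjoint A * A) x‖ := by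
          simpa [hx] using norm_inner_le_norm (𝕜 := 𝕜) ((adjoint A * A) x) x
  calc ‖A x‖ ^ 4 = (‖A x‖ ^ 2) ^ 2 := by ring
    _ ≤ ‖(adjoint A * A) x‖ ^ 2 := by gcongr

theorem sq_norm_inner_apply_self_le {x : E} (hx : ‖x‖ = 1) (A : E →L[𝕜] E) {α : ℝ}
    (hα0 : 0 ≤ α) (hα1 : α ≤ 1) :
    ‖⟪A x, x⟫_𝕜‖ ^ 2 ≤ α / 2 * ‖⟪(A ^ 2) x, x⟫_𝕜‖ + α / 4 * ‖A x‖ ^ 2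
      + (1 - 3 * α / 4) * ‖adjoint A x‖ ^ 2 := by
  have hbuzano : ‖⟪A x, x⟫_𝕜‖ ^ 2 ≤ (‖A x‖ * ‖adjoint A x‖ + ‖⟪(A ^ 2) x, x⟫_𝕜‖) / 2 := by
    have h := norm_inner_mul_inner_le_of_norm_eq_one (𝕜 := 𝕜) hx (A x) (adjoint A x)
    rw [adjoint_inner_right, adjoint_inner_right, norm_mul] at h
    rwa [sq, sq, mul_apply_eq_comp]
  have hcs : ‖⟪A x, x⟫_𝕜‖ ≤ ‖adjoint A x‖ := by
    simpa [adjoint_inner_right, hx] using norm_inner_le_norm (𝕜 := 𝕜) x (adjoint A x)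
  have hcs2 : ‖⟪A x, x⟫_𝕜‖ ^ 2 ≤ ‖adjoint A x‖ ^ 2 := by gcongr
  -- split `‖⟪A x, x⟫‖²` with weights `α`, `1 - α`, and use AM-GM on `‖A x‖ * ‖A† x‖`
  nlinarith [sq_nonneg (‖A x‖ - ‖adjoint A x‖), mul_le_mul_of_nonneg_left hbuzano hα0,
    mul_le_mul_of_nonneg_left hcs2 (sub_nonneg.2 hα1)]

end InnerProduct

theorem absop_sq (A : H →L[ℂ] H) : absop A ^ 2 = adjoint A * A :=
  CFC.sq_sqrt _ (by rw [← star_eq_adjoint]; exact star_mul_self_nonneg A)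

theorem inner_absop_pow_four_apply_self (A : H →L[ℂ] H) (x : H) :
    ⟪(absop A ^ 4) x, x⟫_ℂ = (‖(adjoint A * A) x‖ : ℂ) ^ 2 := by
  rw [show absop A ^ 4 = (adjoint A * A) * (adjoint A * A) by
      rw [show 4 = 2 * 2 from rfl, pow_mul, absop_sq, sq],
    mul_apply_eq_comp, mul_apply_eq_comp, adjoint_inner_left, ← adjoint_inner_right,
    ← mul_apply_eq_comp (adjoint A), inner_self_eq_norm_sq_to_K]
  rfl

theorem inner_smul_absop_sq_add_smul_absop_adjoint_sq_add_absop_pow_four_apply_self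
    (a b : ℝ) (A : H →L[ℂ] H) (x : H) :
    ⟪((a : ℂ) • absop A ^ 2 + (b : ℂ) • absop (adjoint A) ^ 2 + absop A ^ 4) x, x⟫_ℂ =
      ((a * ‖A x‖ ^ 2 + b * ‖adjoint A x‖ ^ 2 + ‖(adjoint A * A) x‖ ^ 2 : ℝ) : ℂ) := by
  simp only [add_apply, smul_apply, inner_add_left, inner_smul_left, absop_sq,
    inner_adjoint_mul_self_apply_self, inner_absop_pow_four_apply_self,
    Complex.conj_ofReal]
  push_cast
  rfl

section Berezin

variable {E ι : Type*} [NormedAddCommGroup E] [InnerProductSpace ℂ E] {k : ι → E}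

theorem norm_inner_le_ber (hk : ∀ lam, ‖k lam‖ = 1) (T : E →L[ℂ] E) (lam : ι) :
    ‖⟪T (k lam), k lam⟫_ℂ‖ ≤ ber k T :=
  le_ciSup (f := fun lam ↦ ‖⟪T (k lam), k lam⟫_ℂ‖) ⟨‖T‖, Set.forall_mem_range.2 fun lam ↦ by
    simpa [hk] using norm_inner_apply_le_opNorm_mul_norm_mul_norm T (k lam) (k lam)⟩ lam

theorem norm_inner_le_bernorm (hk : ∀ lam, ‖k lam‖ = 1) (T : E →L[ℂ] E) (lam mu : ι) :
    ‖⟪T (k lam), k mu⟫_ℂ‖ ≤ bernorm k T :=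
  le_ciSup (f := fun p : ι × ι ↦ ‖⟪T (k p.1), k p.2⟫_ℂ‖) ⟨‖T‖, Set.forall_mem_range.2 fun p ↦ by
    simpa [hk] using norm_inner_apply_le_opNorm_mul_norm_mul_norm T (k p.1) (k p.2)⟩ (lam, mu)

theorem eta_sq_le [Nonempty ι] {T : E →L[ℂ] E} {R : ℝ}
    (h : ∀ lam, ‖⟪T (k lam), k lam⟫_ℂ‖ ^ 2 + ‖T (k lam)‖ ^ 4 ≤ R) : eta k T ^ 2 ≤ R := by
  have hR : 0 ≤ R := (by positivity : (0 : ℝ) ≤ _).trans (h (Classical.arbitrary ι))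
  have heta : eta k T ≤ √R := ciSup_le fun lam ↦ Real.sqrt_le_sqrt (h lam)
  calc eta k T ^ 2 ≤ √R ^ 2 := by gcongr; exact Real.iSup_nonneg fun _ ↦ Real.sqrt_nonneg _
    _ = R := Real.sq_sqrt hR

end Berezin

theorem stmt14 (k : Ω → H) (hk : ∀ lam, ‖k lam‖ = 1) (A : H →L[ℂ] H)
    (α : ℝ) (hα : α ∈ Set.Icc (0 : ℝ) 1) :
    (eta k A) ^ 2 ≤
      (α / 2) * ber k (A ^ 2) +
        bernorm k (((α / 4 : ℝ) : ℂ) • (absop A) ^ 2 +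
          ((1 - 3 * α / 4 : ℝ) : ℂ) • (absop (adjoint A)) ^ 2 + (absop A) ^ 4) := by
  refine eta_sq_le fun lam ↦ ?_
  set B := ((α / 4 : ℝ) : ℂ) • (absop A) ^ 2 +
    ((1 - 3 * α / 4 : ℝ) : ℂ) • (absop (adjoint A)) ^ 2 + (absop A) ^ 4
  have hB : α / 4 * ‖A (k lam)‖ ^ 2 + (1 - 3 * α / 4) * ‖adjoint A (k lam)‖ ^ 2
      + ‖(adjoint A * A) (k lam)‖ ^ 2 ≤ bernorm k B :=
    calc _ ≤ ‖⟪B (k lam), k lam⟫_ℂ‖ := by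
          rw [inner_smul_absop_sq_add_smul_absop_adjoint_sq_add_absop_pow_four_apply_self,
            Complex.norm_real]
          exact Real.le_norm_self _
      _ ≤ bernorm k B := norm_inner_le_bernorm hk B lam lam
  have hA2 : α / 2 * ‖⟪(A ^ 2) (k lam), k lam⟫_ℂ‖ ≤ α / 2 * ber k (A ^ 2) :=
    mul_le_mul_of_nonneg_left (norm_inner_le_ber hk (A ^ 2) lam) (by linarith [hα.1])
  linarith [sq_norm_inner_apply_self_le (hk lam) A hα.1 hα.2, norm_apply_pow_four_le (hk lam) A]
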